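/- Let C be any colouring of the m×n grid (not necessarily a Cauchon diagram), let v be its associated permutation, and for k ∈ {1,...,n} let v^{(k)} be the reading word of the set of black squares (a,b) of C with b ≤ m+k. Then v(j) = v^{(k)}(j) for every j ∈ {1,...,k}. -/

import Mathlib

/-- The transposition `s_{a+b-m-1} = (a+b-m-1, a+b-m)` assigned to the grid square `(a,b)`. -/
def sqPerm (m : ℕ) (p : ℕ × ℕ) : Equiv.Perm ℕ :=
  Equiv.swap (p.1 + p.2 - m - 1) (p.1 + p.2 - m)

/-- The reading word of the set of grid squares satisfying `P`: rows are read from the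
top (`a = m`) down to the bottom (`a = 1`), and within each row columns are read from the
left (`b = m+1`) to the right (`b = m+n`); factors are multiplied so that the last factor
in reading order is applied first. -/
def readingWord (m n : ℕ) (P : ℕ × ℕ → Bool) : Equiv.Perm ℕ :=
  ((List.range m).map fun i =>
    (((List.range n).map fun j =>
      if P (m - i, m + 1 + j) then sqPerm m (m - i, m + 1 + j) else 1)).prod).prod

/-- `(a,b)` is a square of the `m × n` grid: `1 ≤ a ≤ m`, `m+1 ≤ b ≤ m+n`. -/
def InGrid (m n : ℕ) (p : ℕ × ℕ) : Prop :=
  1 ≤ p.1 ∧ p.1 ≤ m ∧ m + 1 ≤ p.2 ∧ p.2 ≤ m + n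

/-- A colouring (`true` = black, `false` = white) is a Cauchon diagram if for every black
square `(a,b)`, either every square `(a,b')` with `b' < b` is black, or every square
`(a',b)` with `a' > a` is black. -/
def IsCauchon (m n : ℕ) (col : ℕ × ℕ → Bool) : Prop :=
  ∀ a b, InGrid m n (a, b) → col (a, b) = true →
    (∀ b', m + 1 ≤ b' → b' < b → col (a, b') = true) ∨
    (∀ a', a < a' → a' ≤ m → col (a', b) = true)

/-- The permutation associated to a colouring: the reading word of its set of black squares. -/
def assocPerm (m n : ℕ) (col : ℕ × ℕ → Bool) : Equiv.Perm ℕ :=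
  readingWord m n col

/-- `v_{x,y}`: the reading word of the black squares `(a,b)` with `a ≥ x` and `b ≤ y`. -/
def vAt (m n : ℕ) (col : ℕ × ℕ → Bool) (x y : ℕ) : Equiv.Perm ℕ :=
  readingWord m n fun p => col p && decide (x ≤ p.1) && decide (p.2 ≤ y)

/-- `w_{x,y}`: the reading word of all grid squares `(a,b)` with `a ≥ x` and `b ≤ y`. -/
def wAt (m n x y : ℕ) : Equiv.Perm ℕ :=
  readingWord m n fun p => decide (x ≤ p.1) && decide (p.2 ≤ y)

/-- Box `k` on the south-east border: `(1, m+k)` if `k ≤ n`, and `(k-n+1, m+n)` otherwise. -/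
def boxSE (m n k : ℕ) : ℕ × ℕ :=
  if k ≤ n then (1, m + k) else (k - n + 1, m + n)

/-- `(X 1, Y 1), ..., (X t, Y t)` is the chain rooted at the square `(x,y)` of the colouring
`col` (with `t = 0` for the empty chain). -/
def IsChainRootedAt (m n : ℕ) (col : ℕ × ℕ → Bool) (x y : ℕ)
    (t : ℕ) (X Y : ℕ → ℕ) : Prop :=
  -- every member of the chain is a white square of the grid
  (∀ i, 1 ≤ i → i ≤ t → InGrid m n (X i, Y i) ∧ col (X i, Y i) = false) ∧
  -- if `(x,y)` is white, the chain starts at `(x,y)`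
  (col (x, y) = false → 1 ≤ t ∧ X 1 = x ∧ Y 1 = y) ∧
  -- if `(x,y)` is black and the chain is nonempty, it starts at the white square
  -- weakly north-west of `(x,y)` nearest to it
  (col (x, y) = true → 1 ≤ t →
    x ≤ X 1 ∧ Y 1 ≤ y ∧
      ∀ a b, InGrid m n (a, b) → col (a, b) = false → x ≤ a → b ≤ y →
        X 1 ≤ a ∧ b ≤ Y 1) ∧
  -- the chain is empty only when there is no white square weakly north-west of `(x,y)`
  (t = 0 → ∀ a b, InGrid m n (a, b) → col (a, b) = false → x ≤ a → b ≤ y → False) ∧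
  -- inductive step: each next member is the nearest white square strictly north-west
  (∀ i, 1 ≤ i → i < t →
    X i < X (i + 1) ∧ Y (i + 1) < Y i ∧
      ∀ a b, InGrid m n (a, b) → col (a, b) = false → X i < a → b < Y i →
        X (i + 1) ≤ a ∧ b ≤ Y (i + 1)) ∧
  -- termination: no white square strictly north-west of the last member
  (1 ≤ t → ∀ a b, InGrid m n (a, b) → col (a, b) = false → X t < a → b < Y t → False)

/-!
Split every row of the grid into its first `k` columns and the rest. Row `a` contributes the
transpositions `s_{a+j}` for the columns `m+1+j`, so the first `k` columns of row `a` keep the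
interval `[0, k+a]` stable, while the remaining columns fix every value below `k+a`. Reading
from the bottom row up, a value `j ≤ k` stays in `[0, k+a-1]` before row `a` is applied, so the
columns beyond `m+k` never act on it.
-/

open Equiv Set

/-- `f m * ⋯ * f 1`: rows read from the top row `m` down to row `1`. -/
def rowsProd (f : ℕ → Perm ℕ) (m : ℕ) : Perm ℕ :=
  ((List.range m).map fun i => f (m - i)).prod

lemma rowsProd_succ (f : ℕ → Perm ℕ) (m : ℕ) : rowsProd f (m + 1) = f (m + 1) * rowsProd f m := by
  simp only [rowsProd, List.prod_range_succ', Nat.sub_zero, Nat.succ_sub_succ]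

section RowsProd

variable {R S : ℕ → Perm ℕ} {c : ℕ}

lemma rowsProd_apply_le (hR : ∀ a, MapsTo (R (a + 1)) (Iic (c + a)) (Iic (c + a + 1)))
    (m : ℕ) {x : ℕ} (hx : x ≤ c) : rowsProd R m x ≤ c + m := by
  induction m with
  | zero => simpa [rowsProd] using hx
  | succ m ih => rw [rowsProd_succ, Perm.mul_apply]; exact hR m ih

lemma rowsProd_mul_apply (hR : ∀ a, MapsTo (R (a + 1)) (Iic (c + a)) (Iic (c + a + 1)))
    (hS : ∀ a x, x ≤ c + a → S (a + 1) x = x) (m : ℕ) {x : ℕ} (hx : x ≤ c) :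
    rowsProd (fun a => R a * S a) m x = rowsProd R m x := by
  induction m with
  | zero => rfl
  | succ m ih =>
    rw [rowsProd_succ, rowsProd_succ, Perm.mul_apply, Perm.mul_apply, Perm.mul_apply, ih,
      hS m _ (rowsProd_apply_le hR m hx)]

end RowsProd

lemma sqPerm_col (m a j : ℕ) : sqPerm m (a, m + 1 + j) = swap (a + j) (a + j + 1) := by
  simp only [sqPerm]
  congr 1 <;> omega

def rowWord (m : ℕ) (P : ℕ × ℕ → Bool) (a : ℕ) (cols : List ℕ) : Perm ℕ :=
  (cols.map fun j => if P (a, m + 1 + j) then sqPerm m (a, m + 1 + j) else 1).prod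

section RowWord

variable {m : ℕ} {P : ℕ × ℕ → Bool} {a : ℕ} {cols : List ℕ}

lemma readingWord_eq_rowsProd (n : ℕ) :
    readingWord m n P = rowsProd (fun a => rowWord m P a (List.range n)) m :=
  rfl

lemma rowWord_append (l₁ l₂ : List ℕ) :
    rowWord m P a (l₁ ++ l₂) = rowWord m P a l₁ * rowWord m P a l₂ := by
  simp only [rowWord, List.map_append, List.prod_append]

lemma rowWord_congr {Q : ℕ × ℕ → Bool} (h : ∀ j ∈ cols, P (a, m + 1 + j) = Q (a, m + 1 + j)) :
    rowWord m P a cols = rowWord m Q a cols := by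
  simp only [rowWord]
  congr 1
  exact List.map_congr_left fun j hj => by rw [h j hj]

lemma rowWord_induction (p : Perm ℕ → Prop) (hmul : ∀ f g, p f → p g → p (f * g)) (hone : p 1)
    (hswap : ∀ j ∈ cols, p (swap (a + j) (a + j + 1))) : p (rowWord m P a cols) := by
  refine List.prod_induction p hmul hone ?_
  simp only [List.mem_map]
  rintro _ ⟨j, hj, rfl⟩
  split
  · rw [sqPerm_col]; exact hswap j hj
  · exact hone

lemma rowWord_mapsTo_Iic {M : ℕ} (hcols : ∀ j ∈ cols, a + j + 1 ≤ M) :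
    MapsTo (rowWord m P a cols) (Iic M) (Iic M) := by
  refine rowWord_induction (fun g => MapsTo g (Iic M) (Iic M))
    (fun f g hf hg => by simpa only [Perm.coe_mul] using hf.comp hg) (mapsTo_id _)
    fun j hj x hx => ?_
  have := hcols j hj
  simp only [mem_Iic] at hx ⊢
  rw [swap_apply_def]
  split_ifs <;> omega

lemma rowWord_apply_of_lt {M : ℕ} (hcols : ∀ j ∈ cols, M ≤ a + j) {x : ℕ} (hx : x < M) :
    rowWord m P a cols x = x := by
  refine rowWord_induction (fun g => ∀ y < M, g y = y)
    (fun f g hf hg y hy => by rw [Perm.mul_apply, hg y hy, hf y hy]) (fun _ _ => rfl)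
    (fun j hj y hy => ?_) x hx
  have := hcols j hj
  exact swap_apply_of_ne_of_ne (by omega) (by omega)

end RowWord

lemma readingWord_apply_of_le {m n k : ℕ} (P : ℕ × ℕ → Bool) (hkn : k ≤ n) {x : ℕ}
    (hx : x ≤ k) :
    readingWord m n P x = rowsProd (fun a => rowWord m P a (List.range k)) m x := by
  have hsplit : readingWord m n P = rowsProd (fun a =>
      rowWord m P a (List.range k) * rowWord m P a ((List.range (n - k)).map (k + ·))) m := by
    simp only [readingWord_eq_rowsProd, ← rowWord_append, ← List.range_add,
      Nat.add_sub_cancel' hkn]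
  rw [hsplit]
  refine rowsProd_mul_apply (fun a => ?_) (fun a y hy => ?_) m hx
  · refine (rowWord_mapsTo_Iic fun j hj => ?_).mono_left (Iic_subset_Iic.2 (Nat.le_succ _))
    have := List.mem_range.1 hj
    omega
  · refine rowWord_apply_of_lt (fun j hj => ?_) (Nat.lt_succ_of_le hy)
    obtain ⟨i, -, rfl⟩ := List.mem_map.1 hj
    omega

theorem assocPerm_eq_truncated_cols_on_initial_general
    (m n : ℕ)
    (col : ℕ × ℕ → Bool)
    (k : ℕ) (hkn : k ≤ n) :
    ∀ j, 1 ≤ j → j ≤ k →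
      assocPerm m n col j =
        readingWord m n (fun p => col p && decide (p.2 ≤ m + k)) j := by
  intro j _ hjk
  rw [assocPerm, readingWord_apply_of_le _ hkn hjk, readingWord_apply_of_le _ hkn hjk]
  congr 2
  funext a
  refine rowWord_congr fun i hi => ?_
  have : m + 1 + i ≤ m + k := by have := List.mem_range.1 hi; omega
  simp [this]

/-- For any colouring `col` of the `m × n` grid with associated permutation `v`, and the
reading word `v^{(k)}` of the black squares `(a,b)` with `b ≤ m+k`, one has
`v j = v^{(k)} j` for every `j ∈ {1,...,k}`. -/
theorem assocPerm_eq_truncated_cols_on_initial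
    (m n : ℕ) (hm : 2 ≤ m) (hn : 2 ≤ n)
    (col : ℕ × ℕ → Bool)
    (k : ℕ) (hk1 : 1 ≤ k) (hkn : k ≤ n) :
    ∀ j, 1 ≤ j → j ≤ k →
      assocPerm m n col j =
        readingWord m n (fun p => col p && decide (p.2 ≤ m + k)) j :=
  assocPerm_eq_truncated_cols_on_initial_general m n col k hkn
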